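/- arXiv:1305.2377 — 3 statements merged into one kernel-verified Lean document; each statement's English description precedes it below -/
import Mathlib

section
/- Let α and α' be two A-connections on an R-Lie algebra L taking values in Der_D(L), such that α' − α = ad_φ for some φ ∈ Ω_A¹(L). Then for every η ∈ Ω_A^p(L) one has d_{α'} η − d_α η = [φ, η], where [·,·] is the shuffle-bracket on L-valued A-forms. -/
/-- The order-preserving inclusion `Fin (n-1) → Fin n` skipping the index `j`. -/
def skipIdx {n : ℕ} (j : Fin n) (m : Fin (n - 1)) : Fin n :=
  if (m : ℕ) < (j : ℕ) then ⟨m, by have := m.isLt; omega⟩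
  else ⟨(m : ℕ) + 1, by have := m.isLt; omega⟩

/-- The Chevalley–Eilenberg/de Rham differential of an `M`-valued `p`-form on a Lie
algebroid `A`, twisted by a connection `α : A → (M → M)`. -/
def dform {A M : Type*} [LieRing A] [AddCommGroup M]
    (α : A → M → M) (p : ℕ) (ξ : (Fin p → A) → M) :
    (Fin (p + 1) → A) → M :=
  fun s =>
    (∑ i : Fin (p + 1), ((-1 : ℤ) ^ (i : ℕ)) • α (s i) (ξ (s ∘ i.succAbove))) +
      ∑ i : Fin (p + 1), ∑ j : Fin p,
        if (i : ℕ) ≤ (j : ℕ) then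
          ((-1 : ℤ) ^ ((i : ℕ) + (j : ℕ) + 1)) •
            ξ (fun m : Fin p =>
              if hm : (m : ℕ) = 0 then ⁅s i, s (i.succAbove j)⁆
              else s (i.succAbove (skipIdx j ⟨(m : ℕ) - 1, by have := m.isLt; omega⟩)))
        else 0

theorem dform_sub_dform {A M : Type*} [LieRing A] [AddCommGroup M]
    (α α' : A → M → M) (p : ℕ) (ξ : (Fin p → A) → M) (s : Fin (p + 1) → A) :
    dform α' p ξ s - dform α p ξ s =
      ∑ i : Fin (p + 1), ((-1 : ℤ) ^ (i : ℕ)) •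
        (α' (s i) (ξ (s ∘ i.succAbove)) - α (s i) (ξ (s ∘ i.succAbove))) := by
  unfold dform
  rw [add_sub_add_right_eq_sub, ← Finset.sum_sub_distrib]
  simp only [smul_sub]

theorem dform_change_of_connection_general
    {k : Type*} [Field k] {R : Type*} [CommRing R]
    {A : Type*} [LieRing A] [Module R A]
    {L : Type*} [LieRing L] [LieAlgebra k L] [LieAlgebra R L]
    (α α' : A → L →ₗ[k] L)
    (φ : A →ₗ[R] L)
    (hφ : ∀ (b : A) (l : L), α' b l = α b l + ⁅φ b, l⁆) :
    ∀ (p : ℕ) (η : A [⋀^Fin p]→ₗ[R] L) (s : Fin (p + 1) → A),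
      dform (fun b l => α' b l) p ⇑η s - dform (fun b l => α b l) p ⇑η s
        = ∑ i : Fin (p + 1), ((-1 : ℤ) ^ (i : ℕ)) • ⁅φ (s i), η (s ∘ i.succAbove)⁆ := by
  intro p η s
  rw [dform_sub_dform]
  refine Finset.sum_congr rfl fun i _ => ?_
  rw [hφ, add_sub_cancel_left]

/-- If `α, α' : A → Der_D(L)` are two `A`-connections on the `R`-Lie
algebra `L` with `α' − α = ad_φ` for a 1-form `φ ∈ Ω_A¹(L)`, then for every
`η ∈ Ω_A^p(L)` one has `d_{α'} η − d_α η = [φ, η]`, where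
`[φ,η](b₁,…,b_{p+1}) = Σᵢ (−1)^{i−1} ⁅φ(bᵢ), η(b₁,…,b̂ᵢ,…,b_{p+1})⁆`. -/
theorem dform_change_of_connection
    {k : Type*} [Field k] {R : Type*} [CommRing R] [Algebra k R]
    {A : Type*} [LieRing A] [LieAlgebra k A] [Module R A] [IsScalarTower k R A]
    {L : Type*} [LieRing L] [LieAlgebra k L] [LieAlgebra R L] [IsScalarTower k R L]
    (a : A →ₗ[R] Derivation k R R)
    (hLeibA : ∀ (s t : A) (f : R), ⁅s, f • t⁆ = f • ⁅s, t⁆ + a s f • t)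
    (α α' : A → L →ₗ[k] L)
    (hαD : ∀ (b : A) (l l' : L), α b ⁅l, l'⁆ = ⁅α b l, l'⁆ + ⁅l, α b l'⁆)
    (hα'D : ∀ (b : A) (l l' : L), α' b ⁅l, l'⁆ = ⁅α' b l, l'⁆ + ⁅l, α' b l'⁆)
    (hαLeib : ∀ (b : A) (f : R) (l : L), α b (f • l) = f • α b l + a b f • l)
    (hα'Leib : ∀ (b : A) (f : R) (l : L), α' b (f • l) = f • α' b l + a b f • l)
    (φ : A →ₗ[R] L)
    (hφ : ∀ (b : A) (l : L), α' b l = α b l + ⁅φ b, l⁆) :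
    ∀ (p : ℕ) (η : A [⋀^Fin p]→ₗ[R] L) (s : Fin (p + 1) → A),
      dform (fun b l => α' b l) p ⇑η s - dform (fun b l => α b l) p ⇑η s
        = ∑ i : Fin (p + 1), ((-1 : ℤ) ^ (i : ℕ)) • ⁅φ (s i), η (s ∘ i.succAbove)⁆ :=
  dform_change_of_connection_general α α' φ hφ
end

section
/- Let 0 → L → A → B → 0 be an extension of Lie-Rinehart algebras with B projective over R, and s: B → A an R-linear splitting. Define α_s(b)(l) = [s(b), l] and ρ_s(b₁,b₂) = [s(b₁),s(b₂)] − s([b₁,b₂]). Then (α_s, ρ_s) is a lifting pair of the induced coupling ᾱ, i.e., ad_{ρ_s} = F_{α_s}, and moreover d_{α_s} ρ_s = 0. -/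
/-!
Everything is a consequence of the Jacobi identity. The curvature `ρ_s` of the splitting measures
the failure of `s` to be a Lie map; since `π` preserves brackets and `π ∘ s = id`, both `ρ_s` and
`⁅s b, ι l⁆` lie in `ker π = range ι`. Jacobi in `A` gives `ad_{ρ_s} = F_{α_s}`, and Jacobi in `A`
and in `B`, together with antisymmetry, give the Bianchi identity `d_{α_s} ρ_s = 0`.
-/

namespace LieRing

variable {A B : Type*} [LieRing A] [LieRing B]

def curvature (s : B → A) (b₁ b₂ : B) : A := ⁅s b₁, s b₂⁆ - s ⁅b₁, b₂⁆

theorem lie_curvature (s : B → A) (b₁ b₂ : B) (a : A) :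
    ⁅curvature s b₁ b₂, a⁆ = ⁅s b₁, ⁅s b₂, a⁆⁆ - ⁅s b₂, ⁅s b₁, a⁆⁆ - ⁅s ⁅b₁, b₂⁆, a⁆ := by
  rw [curvature, sub_lie, lie_lie]

theorem map_curvature_eq_zero (π : A →+ B) (hπ : ∀ x y : A, π ⁅x, y⁆ = ⁅π x, π y⁆)
    (s : B → A) (hs : ∀ b : B, π (s b) = b) (b₁ b₂ : B) :
    π (curvature s b₁ b₂) = 0 := by
  rw [curvature, map_sub, hπ, hs, hs, hs, sub_self]

theorem curvature_bianchi (s : B →+ A) (b₁ b₂ b₃ : B) :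
    ⁅s b₁, curvature s b₂ b₃⁆ - ⁅s b₂, curvature s b₁ b₃⁆ + ⁅s b₃, curvature s b₁ b₂⁆
      - curvature s ⁅b₁, b₂⁆ b₃ + curvature s ⁅b₁, b₃⁆ b₂ - curvature s ⁅b₂, b₃⁆ b₁ = 0 := by
  simp only [curvature, lie_sub]
  have jacobiA : ⁅s b₁, ⁅s b₂, s b₃⁆⁆ = ⁅s b₂, ⁅s b₁, s b₃⁆⁆ - ⁅s b₃, ⁅s b₁, s b₂⁆⁆ := by
    rw [leibniz_lie, ← lie_skew ⁅s b₁, s b₂⁆, add_comm, ← sub_eq_add_neg]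
  have jacobiB : s ⁅⁅b₁, b₂⁆, b₃⁆ = s ⁅b₁, ⁅b₂, b₃⁆⁆ - s ⁅b₂, ⁅b₁, b₃⁆⁆ := by
    rw [lie_lie, map_sub]
  rw [jacobiA, jacobiB, ← lie_skew ⁅b₁, b₃⁆ b₂, ← lie_skew ⁅b₂, b₃⁆ b₁,
    ← lie_skew (s ⁅b₁, b₂⁆), ← lie_skew (s ⁅b₁, b₃⁆), ← lie_skew (s ⁅b₂, b₃⁆)]
  simp only [map_neg]
  abel

end LieRing

theorem splitting_gives_flat_lifting_pair_general
    {R : Type*} [CommRing R]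
    {A : Type*} [LieRing A] [Module R A]
    {B : Type*} [LieRing B] [Module R B]
    {L : Type*} [LieRing L] [LieAlgebra R L]
    (ι : L →ₗ[R] A) (π : A →ₗ[R] B)
    (hπbr : ∀ x y : A, π ⁅x, y⁆ = ⁅π x, π y⁆)
    (hexact : LinearMap.range ι = LinearMap.ker π)
    (s : B →ₗ[R] A) (hs : ∀ b : B, π (s b) = b) :
    ∀ ρA : B → B → A, ρA = (fun b₁ b₂ => ⁅s b₁, s b₂⁆ - s ⁅b₁, b₂⁆) →
      -- `α_s` is well defined: `⁅s b, ι l⁆` lies in the image of `L`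
      (∀ (b : B) (l : L), ⁅s b, ι l⁆ ∈ LinearMap.range ι) ∧
      -- `ρ_s` takes values in the image of `L`
      (∀ b₁ b₂ : B, ρA b₁ b₂ ∈ LinearMap.range ι) ∧
      -- `ad_{ρ_s} = F_{α_s}`, i.e. `(α_s, ρ_s)` is a lifting pair of `ᾱ`
      (∀ (b₁ b₂ : B) (l : L),
        ⁅s b₁, ⁅s b₂, ι l⁆⁆ - ⁅s b₂, ⁅s b₁, ι l⁆⁆ - ⁅s ⁅b₁, b₂⁆, ι l⁆
          = ⁅ρA b₁ b₂, ι l⁆) ∧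
      -- `d_{α_s} ρ_s = 0`
      (∀ b₁ b₂ b₃ : B,
        ⁅s b₁, ρA b₂ b₃⁆ - ⁅s b₂, ρA b₁ b₃⁆ + ⁅s b₃, ρA b₁ b₂⁆
          - ρA ⁅b₁, b₂⁆ b₃ + ρA ⁅b₁, b₃⁆ b₂ - ρA ⁅b₂, b₃⁆ b₁ = 0) := by
  rintro ρA rfl
  have mem_range_of_map_eq_zero : ∀ x : A, π x = 0 → x ∈ LinearMap.range ι :=
    fun x hx => hexact ▸ hx
  have map_ι : ∀ l : L, π (ι l) = 0 := fun l =>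
    (hexact ▸ LinearMap.mem_range_self ι l : ι l ∈ LinearMap.ker π)
  refine ⟨fun b l => mem_range_of_map_eq_zero _ ?_, fun b₁ b₂ => mem_range_of_map_eq_zero _ ?_,
    fun b₁ b₂ l => (LieRing.lie_curvature s b₁ b₂ (ι l)).symm,
    fun b₁ b₂ b₃ => LieRing.curvature_bianchi s.toAddMonoidHom b₁ b₂ b₃⟩
  · rw [hπbr, map_ι, lie_zero]
  · exact LieRing.map_curvature_eq_zero π.toAddMonoidHom hπbr s hs b₁ b₂

/-- Let `0 → L → A → B → 0` be an extension of `(k,R)`-Lie–Rinehart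
algebras with `B` projective over `R`, and `s : B → A` an `R`-linear splitting.
Define `α_s(b)(l) = ⁅s b, l⁆` and `ρ_s(b₁,b₂) = ⁅s b₁, s b₂⁆ − s ⁅b₁,b₂⁆`.  Then
`(α_s, ρ_s)` is a lifting pair of the induced coupling `ᾱ` — in particular `α_s` and
`ρ_s` take values in (the image of) `L` and `ad_{ρ_s} = F_{α_s}` — and moreover
`d_{α_s} ρ_s = 0`.  (All identities are stated inside `A` via the injection `ι`.) -/
theorem splitting_gives_flat_lifting_pair
    {k : Type*} [Field k] {R : Type*} [CommRing R] [Algebra k R]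
    {A : Type*} [LieRing A] [LieAlgebra k A] [Module R A] [IsScalarTower k R A]
    {B : Type*} [LieRing B] [LieAlgebra k B] [Module R B] [IsScalarTower k R B]
    [Module.Projective R B]
    {L : Type*} [LieRing L] [LieAlgebra k L] [LieAlgebra R L] [IsScalarTower k R L]
    (aA : A →ₗ[R] Derivation k R R) (aB : B →ₗ[R] Derivation k R R)
    (hLeibA : ∀ (x y : A) (f : R), ⁅x, f • y⁆ = f • ⁅x, y⁆ + aA x f • y)
    (hLeibB : ∀ (x y : B) (f : R), ⁅x, f • y⁆ = f • ⁅x, y⁆ + aB x f • y)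
    (ι : L →ₗ[R] A) (π : A →ₗ[R] B)
    (hι : Function.Injective ι) (hπ : Function.Surjective π)
    (hιbr : ∀ l l' : L, ι ⁅l, l'⁆ = ⁅ι l, ι l'⁆)
    (hπbr : ∀ x y : A, π ⁅x, y⁆ = ⁅π x, π y⁆)
    (hπa : ∀ x : A, aA x = aB (π x))
    (hexact : LinearMap.range ι = LinearMap.ker π)
    (s : B →ₗ[R] A) (hs : ∀ b : B, π (s b) = b) :
    ∀ ρA : B → B → A, ρA = (fun b₁ b₂ => ⁅s b₁, s b₂⁆ - s ⁅b₁, b₂⁆) →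
      -- `α_s` is well defined: `⁅s b, ι l⁆` lies in the image of `L`
      (∀ (b : B) (l : L), ⁅s b, ι l⁆ ∈ LinearMap.range ι) ∧
      -- `ρ_s` takes values in the image of `L`
      (∀ b₁ b₂ : B, ρA b₁ b₂ ∈ LinearMap.range ι) ∧
      -- `ad_{ρ_s} = F_{α_s}`, i.e. `(α_s, ρ_s)` is a lifting pair of `ᾱ`
      (∀ (b₁ b₂ : B) (l : L),
        ⁅s b₁, ⁅s b₂, ι l⁆⁆ - ⁅s b₂, ⁅s b₁, ι l⁆⁆ - ⁅s ⁅b₁, b₂⁆, ι l⁆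
          = ⁅ρA b₁ b₂, ι l⁆) ∧
      -- `d_{α_s} ρ_s = 0`
      (∀ b₁ b₂ b₃ : B,
        ⁅s b₁, ρA b₂ b₃⁆ - ⁅s b₂, ρA b₁ b₃⁆ + ⁅s b₃, ρA b₁ b₂⁆
          - ρA ⁅b₁, b₂⁆ b₃ + ρA ⁅b₁, b₃⁆ b₂ - ρA ⁅b₂, b₃⁆ b₁ = 0) :=
  splitting_gives_flat_lifting_pair_general ι π hπbr hexact s hs
end

section
/- Let L ⊆ A be Lie-Rinehart algebras with L an ideal with zero anchor, and let F^p Ω_A^• be the filtration by forms annihilated by q−p+1 contractions with elements of L. Then the filtration is preserved by the de Rham differential: d_A(F^p Ω_A^q) ⊆ F^p Ω_A^{q+1}. -/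
open scoped Classical in
/-- Membership in the filtration `F^p Ω_A^n`: the `n`-form `ξ` vanishes whenever at
least `n − p + 1` of its arguments lie in `L` (i.e. it is annihilated by contraction
with `n − p + 1` elements of `L`). -/
def FmemFil {A M : Type*} [AddCommGroup M] (L : Set A) (p n : ℕ)
    (ξ : (Fin n → A) → M) : Prop :=
  ∀ v : Fin n → A,
    n - p + 1 ≤ (Finset.univ.filter fun i => v i ∈ L).card → ξ v = 0

open Finset

theorem Fin.card_filter_univ_succAbove {n : ℕ} (P : Fin (n + 1) → Prop) [DecidablePred P]
    (i : Fin (n + 1)) : #{t | P t} = ite (P i) 1 0 + #{m | P (i.succAbove m)} := by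
  simp only [Finset.card_filter, Fin.sum_univ_succAbove _ i]

theorem skipIdx_eq_succAbove {n : ℕ} (j : Fin (n + 1)) (m : Fin n) :
    skipIdx j m = j.succAbove m := by
  unfold skipIdx
  split_ifs with h
  · exact (Fin.succAbove_of_castSucc_lt _ _ h).symm
  · exact (Fin.succAbove_of_le_castSucc _ _ (not_lt.1 h)).symm

theorem dite_succAbove_skipIdx_eq_cons {α : Type*} {n : ℕ} (x : α) (v : Fin (n + 2) → α)
    (i : Fin (n + 2)) (j : Fin (n + 1)) :
    (fun m : Fin (n + 1) => if hm : (m : ℕ) = 0 then x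
      else v (i.succAbove (skipIdx j ⟨(m : ℕ) - 1, by have := m.isLt; omega⟩))) =
      Fin.cons x (v ∘ i.succAbove ∘ j.succAbove) := by
  funext m
  cases m using Fin.cases <;> simp [skipIdx_eq_succAbove]

theorem lie_mem_of_mem_or_mem {A S : Type*} [LieRing A] [SetLike S A] [NegMemClass S A] {L : S}
    (hL : ∀ x : A, ∀ l ∈ L, ⁅x, l⁆ ∈ L) {x y : A} (h : x ∈ L ∨ y ∈ L) : ⁅x, y⁆ ∈ L := by
  rcases h with hx | hy
  · rw [← lie_skew]; exact neg_mem (hL y x hx)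
  · exact hL x y hy

open scoped Classical in
theorem FmemFil.apply_comp_succAbove_eq_zero {A M : Type*} [AddCommGroup M] {L : Set A} {p n : ℕ}
    {ξ : (Fin n → A) → M} (hξ : FmemFil L p n ξ) {v : Fin (n + 1) → A}
    (hv : n + 1 - p + 1 ≤ #{t | v t ∈ L}) {i : Fin (n + 1)} (hi : v i ∉ L) :
    ξ (v ∘ i.succAbove) = 0 := by
  refine hξ _ ?_
  rw [Fin.card_filter_univ_succAbove _ i, if_neg hi, zero_add] at hv
  exact le_trans (by omega) hv

open scoped Classical in
theorem FmemFil.apply_cons_lie_eq_zero {A M : Type*} [LieRing A] [AddCommGroup M] {L : Set A}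
    (hL : ∀ x y : A, x ∈ L ∨ y ∈ L → ⁅x, y⁆ ∈ L) {p n : ℕ}
    {ξ : (Fin (n + 1) → A) → M} (hξ : FmemFil L p (n + 1) ξ) {v : Fin (n + 2) → A}
    (hv : n + 2 - p + 1 ≤ #{t | v t ∈ L}) (i : Fin (n + 2)) (j : Fin (n + 1)) :
    ξ (Fin.cons ⁅v i, v (i.succAbove j)⁆ (v ∘ i.succAbove ∘ j.succAbove)) = 0 := by
  refine hξ _ ?_
  -- The count of arguments in `L` drops by one at most, and only when the bracket is in `L`:
  -- this matters because the bound `n + 1 - p + 1` is truncated at `1`.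
  have hbracket := hL (v i) (v (i.succAbove j))
  rw [Fin.card_filter_univ_succAbove _ i, Fin.card_filter_univ_succAbove _ j] at hv
  rw [Fin.card_filter_univ_succ']
  simp only [Fin.cons_zero, Fin.cons_succ, Function.comp_apply]
  split_ifs at hv ⊢ <;> grind

theorem dform_preserves_filtration_general
    {k : Type*} [Field k] {R : Type*} [CommRing R] [Algebra k R]
    {A : Type*} [LieRing A] [Module R A]
    (a : A →ₗ[R] Derivation k R R)
    (L : Submodule R A)
    (hIdeal : ∀ (x : A), ∀ l ∈ L, ⁅x, l⁆ ∈ L)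
    (hAnchor : ∀ l ∈ L, a l = 0)
    (p q : ℕ) (ξ : A [⋀^Fin q]→ₗ[R] R)
    (hξ : FmemFil (L : Set A) p q ⇑ξ) :
    FmemFil (L : Set A) p (q + 1) (dform (fun s f => a s f) q ⇑ξ) := by
  intro v hv
  have anchor_term (i : Fin (q + 1)) : a (v i) (ξ (v ∘ i.succAbove)) = 0 := by
    by_cases hi : v i ∈ L
    · rw [hAnchor _ hi, Derivation.zero_apply]
    · rw [hξ.apply_comp_succAbove_eq_zero hv hi, map_zero]
  have bracket_term (i : Fin (q + 1)) (j : Fin q) : ξ (fun m : Fin q =>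
      if hm : (m : ℕ) = 0 then ⁅v i, v (i.succAbove j)⁆
      else v (i.succAbove (skipIdx j ⟨(m : ℕ) - 1, by have := m.isLt; omega⟩))) = 0 := by
    obtain ⟨n, rfl⟩ := Nat.exists_eq_add_one_of_ne_zero j.pos.ne'
    rw [dite_succAbove_skipIdx_eq_cons]
    exact hξ.apply_cons_lie_eq_zero (fun x y => lie_mem_of_mem_or_mem hIdeal) hv i j
  simp only [dform]
  rw [Finset.sum_eq_zero fun i _ => by rw [anchor_term, smul_zero], zero_add]
  refine Finset.sum_eq_zero fun i _ => Finset.sum_eq_zero fun j _ => ?_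
  split_ifs
  · rw [bracket_term, smul_zero]
  · rfl

/-- Let `A` be a `(k,R)`-Lie–Rinehart algebra and `L ⊆ A` a Lie ideal
contained in the kernel of the anchor.  Then the de Rham differential preserves the
filtration: `d_A(F^p Ω_A^q) ⊆ F^p Ω_A^{q+1}`. -/
theorem dform_preserves_filtration
    {k : Type*} [Field k] {R : Type*} [CommRing R] [Algebra k R]
    {A : Type*} [LieRing A] [LieAlgebra k A] [Module R A] [IsScalarTower k R A]
    (a : A →ₗ[R] Derivation k R R)
    (hLeib : ∀ (s t : A) (f : R), ⁅s, f • t⁆ = f • ⁅s, t⁆ + a s f • t)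
    (L : Submodule R A)
    (hIdeal : ∀ (x : A), ∀ l ∈ L, ⁅x, l⁆ ∈ L)
    (hAnchor : ∀ l ∈ L, a l = 0)
    (p q : ℕ) (ξ : A [⋀^Fin q]→ₗ[R] R)
    (hξ : FmemFil (L : Set A) p q ⇑ξ) :
    FmemFil (L : Set A) p (q + 1) (dform (fun s f => a s f) q ⇑ξ) :=
  dform_preserves_filtration_general a L hIdeal hAnchor p q ξ hξ
end
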